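/- arXiv:1901.05031 — 2 statements merged into one kernel-verified Lean document; each statement's English description precedes it below -/
import Mathlib

section
/- Let n, m ≥ 1, let A = (a_{ij}) ∈ ℝ^{n×n} be symmetric with nonnegative entries, and let B = (b_{ij}) ∈ ℝ^{n×m} have nonnegative entries. Define the diagonal matrix D with D_{ii} = Σ_{j=1}^n a_{ij} + Σ_{j=1}^m b_{ij}, and set L = D − A. If the graph on n nodes with edge weights (a_{ij}) is connected (any two nodes are joined by a path of edges with positive weight) and b_{ij} > 0 for some i, j, then L is positive definite. -/
noncomputable section

theorem graph_laplacian_posdef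
    (n m : ℕ) (hn : 1 ≤ n) (hm : 1 ≤ m)
    (A : Matrix (Fin n) (Fin n) ℝ) (hAsymm : A.IsSymm)
    (hApos : ∀ i j, 0 ≤ A i j)
    (B : Matrix (Fin n) (Fin m) ℝ) (hBpos : ∀ i j, 0 ≤ B i j)
    (hconn : ∀ i j : Fin n, Relation.ReflTransGen (fun a b : Fin n => 0 < A a b) i j)
    (hB : ∃ i j, 0 < B i j) :
    (Matrix.diagonal (fun i => (∑ j, A i j) + ∑ j, B i j) - A).PosDef := by
  have hAij : ∀ i j, A i j = A j i := fun i j => by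
    conv_rhs => rw [← hAsymm]
    rfl
  refine Matrix.PosDef.of_dotProduct_mulVec_pos ?_ ?_
  · show _ = _
    ext i j
    simp only [Matrix.conjTranspose_apply, Matrix.sub_apply, Matrix.diagonal_apply,
      star_trivial, hAij j i]
    congr 1
    by_cases h : i = j
    · subst h; simp
    · simp [h, Ne.symm h]
  · intro x hx
    have swap : ∑ i, ∑ j, A i j * (x j)^2 = ∑ i, ∑ j, A i j * (x i)^2 := by
      rw [Finset.sum_comm]
      refine Finset.sum_congr rfl fun i _ => Finset.sum_congr rfl fun j _ => ?_
      rw [hAij]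
    have e1 : ∑ i, ∑ j, A i j * (x i - x j)^2
        = (∑ i, ∑ j, A i j * (x i)^2) + (∑ i, ∑ j, A i j * (x j)^2)
          - 2 * ∑ i, ∑ j, A i j * (x i * x j) := by
      have expand : ∀ i j : Fin n, A i j * (x i - x j)^2
          = A i j * (x i)^2 + A i j * (x j)^2 - 2 * (A i j * (x i * x j)) := by
        intros; ring
      simp only [expand, Finset.sum_add_distrib, Finset.sum_sub_distrib, ← Finset.mul_sum]
    have e2 : dotProduct (star x)
        ((Matrix.diagonal (fun i => (∑ j, A i j) + ∑ j, B i j) - A).mulVec x)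
        = (∑ i, ∑ j, A i j * (x i)^2) + (∑ i, ∑ j, B i j * (x i)^2)
          - ∑ i, ∑ j, A i j * (x i * x j) := by
      simp only [dotProduct, Matrix.mulVec, Matrix.sub_apply, Matrix.diagonal_apply,
        star_trivial, Pi.star_apply, sub_mul, ite_mul, zero_mul, Finset.sum_sub_distrib,
        Finset.sum_ite_eq, Finset.mem_univ, if_true]
      rw [← Finset.sum_add_distrib, ← Finset.sum_sub_distrib]
      refine Finset.sum_congr rfl fun i _ => ?_
      rw [mul_sub, Finset.mul_sum,
        show x i * ((∑ j, A i j + ∑ j, B i j) * x i)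
          = (∑ j, A i j) * (x i)^2 + (∑ j, B i j) * (x i)^2 from by ring,
        Finset.sum_mul, Finset.sum_mul]
      congr 1
      refine Finset.sum_congr rfl fun j _ => ?_
      ring
    have key : dotProduct (star x)
        ((Matrix.diagonal (fun i => (∑ j, A i j) + ∑ j, B i j) - A).mulVec x)
        = (1/2) * ∑ i, ∑ j, A i j * (x i - x j)^2 + ∑ i, ∑ j, B i j * (x i)^2 := by
      rw [e2, e1]
      linear_combination (-1/2 : ℝ) * swap
    rw [key]
    obtain ⟨i0, j0, hb⟩ := hB
    have hQA : (0:ℝ) ≤ ∑ i, ∑ j, A i j * (x i - x j)^2 :=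
      Finset.sum_nonneg fun i _ => Finset.sum_nonneg fun j _ =>
        mul_nonneg (hApos i j) (sq_nonneg _)
    have hQB : (0:ℝ) ≤ ∑ i, ∑ j, B i j * (x i)^2 :=
      Finset.sum_nonneg fun i _ => Finset.sum_nonneg fun j _ =>
        mul_nonneg (hBpos i j) (sq_nonneg _)
    rcases lt_or_eq_of_le (by positivity :
        (0:ℝ) ≤ (1/2) * ∑ i, ∑ j, A i j * (x i - x j)^2 + ∑ i, ∑ j, B i j * (x i)^2) with h | h
    · exact h
    exfalso
    have hQA0 : ∑ i, ∑ j, A i j * (x i - x j)^2 = 0 := by nlinarith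
    have hQB0 : ∑ i, ∑ j, B i j * (x i)^2 = 0 := by nlinarith
    have hA0 : ∀ i j : Fin n, A i j * (x i - x j)^2 = 0 := by
      intro i j
      have h1 := (Finset.sum_eq_zero_iff_of_nonneg (fun i _ =>
        Finset.sum_nonneg fun j _ => mul_nonneg (hApos i j) (sq_nonneg _))).mp hQA0 i
        (Finset.mem_univ i)
      exact (Finset.sum_eq_zero_iff_of_nonneg (fun j _ =>
        mul_nonneg (hApos i j) (sq_nonneg _))).mp h1 j (Finset.mem_univ j)
    have step : ∀ a b : Fin n, 0 < A a b → x a = x b := by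
      intro a b hab
      have := hA0 a b
      rcases mul_eq_zero.mp this with h' | h'
      · exact absurd h' (ne_of_gt hab)
      · have := pow_eq_zero_iff (n := 2) (by norm_num) |>.mp h'
        linarith [sub_eq_zero.mp this]
    have hB0 : B i0 j0 * (x i0)^2 = 0 := by
      have h1 := (Finset.sum_eq_zero_iff_of_nonneg (fun i _ =>
        Finset.sum_nonneg fun j _ => mul_nonneg (hBpos i j) (sq_nonneg _))).mp hQB0 i0
        (Finset.mem_univ i0)
      exact (Finset.sum_eq_zero_iff_of_nonneg (fun j _ =>
        mul_nonneg (hBpos i0 j) (sq_nonneg _))).mp h1 j0 (Finset.mem_univ j0)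
    have hxi0 : x i0 = 0 := by
      rcases mul_eq_zero.mp hB0 with h' | h'
      · exact absurd h' (ne_of_gt hb)
      · exact pow_eq_zero_iff (n := 2) (by norm_num) |>.mp h'
    apply hx
    funext k
    have hk : ∀ c, Relation.ReflTransGen (fun a b : Fin n => 0 < A a b) k c → x k = x c := by
      intro c h
      induction h with
      | refl => rfl
      | tail _ hbc ih => exact ih.trans (step _ _ hbc)
    simp [hk i0 (hconn k i0), hxi0]
end
end

section
/- Assume w_{xy} ≤ 1 for all x, y ∈ 𝒳 and 0 < α ≤ p/(2p−3). Then for any u, v : 𝒳 → ℝ with u ≤ v pointwise on 𝒳, one has u(x) + α 𝓛^G_p u(x) ≤ v(x) + α 𝓛^G_p v(x) for every x ∈ 𝒳. -/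
noncomputable section

/-- The game-theoretic graph p-Laplacian
`𝓛^G_p u(x) = (1/(d_x p)) Σ_y w_{xy}(u(y)−u(x))
  + (1−2/p)(min_y w_{xy}(u(y)−u(x)) + max_y w_{xy}(u(y)−u(x)))`. -/
def gameLap {V : Type*} [Fintype V] [Nonempty V] (w : V → V → ℝ) (p : ℝ)
    (u : V → ℝ) (x : V) : ℝ :=
  (1 / ((∑ y, w x y) * p)) * ∑ y, w x y * (u y - u x) +
    (1 - 2 / p) * ((⨅ y, w x y * (u y - u x)) + (⨆ y, w x y * (u y - u x)))

theorem gameLap_monotone_step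
    {V : Type*} [Fintype V] [Nonempty V]
    (w : V → V → ℝ) (hsymm : ∀ x y, w x y = w y x) (hnonneg : ∀ x y, 0 ≤ w x y)
    (hdeg : ∀ x, 0 < ∑ y, w x y)
    (p : ℝ) (hp : 2 < p)
    (hw1 : ∀ x y, w x y ≤ 1)
    (α : ℝ) (hα0 : 0 < α) (hα : α ≤ p / (2 * p - 3))
    (u v : V → ℝ) (huv : ∀ x, u x ≤ v x) :
    ∀ x, u x + α * gameLap w p u x ≤ v x + α * gameLap w p v x := by
  intro x
  have hp0 : (0:ℝ) < p := by linarith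
  set c : ℝ := v x - u x with hcdef
  have hc : 0 ≤ c := sub_nonneg.mpr (huv x)
  set d : ℝ := ∑ y, w x y with hd
  have hd0 : 0 < d := hdeg x
  set fu : V → ℝ := fun y => w x y * (u y - u x) with hfu
  set fv : V → ℝ := fun y => w x y * (v y - v x) with hfv
  -- pointwise shift bound
  have hpt : ∀ y, fu y ≤ fv y + c := by
    intro y
    have h1 : w x y * (u y - v y) ≤ 0 :=
      mul_nonpos_of_nonneg_of_nonpos (hnonneg x y) (by linarith [huv y])
    have h2 : w x y * (v x - u x) ≤ v x - u x := mul_le_of_le_one_left hc (hw1 x y)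
    simp only [hfu, hfv, hcdef]
    nlinarith
  -- sum bound
  have hS : ∑ y, fu y ≤ (∑ y, fv y) + d * c := by
    have : ∑ y, fu y ≤ ∑ y, (fv y + w x y * c) := by
      apply Finset.sum_le_sum
      intro y _
      have h1 : w x y * (u y - v y) ≤ 0 :=
        mul_nonpos_of_nonneg_of_nonpos (hnonneg x y) (by linarith [huv y])
      have hcw : w x y * c = w x y * v x - w x y * u x := by rw [hcdef]; ring
      simp only [hfu, hfv]
      nlinarith [hcw]
    calc ∑ y, fu y ≤ ∑ y, (fv y + w x y * c) := this
      _ = (∑ y, fv y) + d * c := by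
          rw [Finset.sum_add_distrib, ← Finset.sum_mul]
  -- inf bound
  have hI : (⨅ y, fu y) ≤ (⨅ y, fv y) + c := by
    obtain ⟨y₀, hy₀⟩ := Finite.exists_min fv
    have h1 : (⨅ y, fu y) ≤ fu y₀ := ciInf_le (Finite.bddBelow_range fu) y₀
    have h2 : fv y₀ ≤ ⨅ y, fv y := le_ciInf hy₀
    linarith [hpt y₀]
  -- sup bound
  have hJ : (⨆ y, fu y) ≤ (⨆ y, fv y) + c := by
    obtain ⟨y₁, hy₁⟩ := Finite.exists_max fu
    have h1 : (⨆ y, fu y) ≤ fu y₁ := ciSup_le hy₁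
    have h2 : fv y₁ ≤ ⨆ y, fv y := le_ciSup (Finite.bddAbove_range fv) y₁
    linarith [hpt y₁]
  -- scaled sum bound
  have hS' : (1 / (d * p)) * ∑ y, fu y ≤ (1 / (d * p)) * (∑ y, fv y) + c / p := by
    have hdp : 0 < d * p := mul_pos hd0 hp0
    have h1 : (1 / (d * p)) * ∑ y, fu y ≤ (1 / (d * p)) * ((∑ y, fv y) + d * c) := by
      apply mul_le_mul_of_nonneg_left hS (by positivity)
    have h2 : (1 / (d * p)) * ((∑ y, fv y) + d * c)
        = (1 / (d * p)) * (∑ y, fv y) + c / p := by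
      field_simp
    linarith
  have hq : (0:ℝ) ≤ 1 - 2 / p := by
    rw [sub_nonneg, div_le_one hp0]; linarith
  have hIJ : (1 - 2 / p) * ((⨅ y, fu y) + (⨆ y, fu y))
      ≤ (1 - 2 / p) * ((⨅ y, fv y) + (⨆ y, fv y)) + (1 - 2 / p) * (2 * c) := by
    nlinarith [mul_le_mul_of_nonneg_left (add_le_add hI hJ) hq]
  -- key coefficient bound : α * (1/p + 2*(1 - 2/p)) ≤ 1
  have h2p3 : (0:ℝ) < 2 * p - 3 := by linarith
  have hα' : α * (2 * p - 3) ≤ p := by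
    rw [← le_div_iff₀ h2p3]; exact hα
  have hkey : α * (1 / p + 2 * (1 - 2 / p)) ≤ 1 := by
    have hpinv : p * (1 / p) = 1 := mul_one_div_cancel hp0.ne'
    have h1 : α * (2 * p - 3) * (1 / p) ≤ p * (1 / p) :=
      mul_le_mul_of_nonneg_right hα' (by positivity)
    have h2 : α * (p * (1 / p)) = α := by rw [hpinv, mul_one]
    ring_nf at h1 h2 hpinv ⊢
    linarith
  -- combine
    -- goal : u x + α * (A_u + B_u) ≤ v x + α * (A_v + B_v)
  have hgu : gameLap w p u x
      = 1 / (d * p) * ∑ y, fu y + (1 - 2 / p) * ((⨅ y, fu y) + (⨆ y, fu y)) := rfl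
  have hgv : gameLap w p v x
      = 1 / (d * p) * ∑ y, fv y + (1 - 2 / p) * ((⨅ y, fv y) + (⨆ y, fv y)) := rfl
  clear_value c d fu fv
  rw [hgu, hgv]
  have hA := mul_le_mul_of_nonneg_left hS' hα0.le
  have hB := mul_le_mul_of_nonneg_left hIJ hα0.le
  have hK := mul_le_mul_of_nonneg_left hkey hc
  have hvx : v x = u x + c := by rw [hcdef]; ring
  rw [hvx]
  have hsum := add_le_add (add_le_add hA hB) hK
  ring_nf at hsum ⊢
  linarith
end
end
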